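/- Define f : D → ℝ on D = {(x,y) ∈ ℝ² : 2y > x²} by f(x,y) = (1/3)·(2y − x²)^{3/2}. Then f is C² on D with det(D²f)(x,y) = −1 for all (x,y) ∈ D, and f together with its gradient ∇f extends continuously by zero to the boundary parabola {2y = x²}. Hence f is the (inner) area distance of the parabola y = x²/2 and its graph is an indefinite improper affine sphere. -/

import Mathlib

noncomputable section

open Filter

/-- Gradient of `f : ℝ² → ℝ`. -/
def grad (f : ℝ × ℝ → ℝ) (p : ℝ × ℝ) : ℝ × ℝ :=
  (fderiv ℝ f p (1, 0), fderiv ℝ f p (0, 1))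

/-- Hessian of `f` at `p`, as a bilinear form. -/
def hess (f : ℝ × ℝ → ℝ) (p : ℝ × ℝ) (a b : ℝ × ℝ) : ℝ :=
  fderiv ℝ (fderiv ℝ f) p a b

/-- Determinant of the Hessian matrix of `f` at `p`. -/
def hessDet (f : ℝ × ℝ → ℝ) (p : ℝ × ℝ) : ℝ :=
  hess f p (1, 0) (1, 0) * hess f p (0, 1) (0, 1)
    - hess f p (1, 0) (0, 1) * hess f p (0, 1) (1, 0)

/-- The inner area distance of the parabola `y = x²/2`:
`f(x,y) = (1/3)(2y − x²)^{3/2}` on `D = {2y > x²}`. -/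
def fParab (w : ℝ × ℝ) : ℝ := (1 / 3) * (2 * w.2 - w.1 ^ 2) ^ ((3 : ℝ) / 2)

/-- The inner parabolic region `D = {(x,y) : 2y > x²}`. -/
def DParab : Set (ℝ × ℝ) := {w : ℝ × ℝ | w.1 ^ 2 < 2 * w.2}

/-!
Write `g = 2y − x²` and `ℓ = dy − x dx` (`gap` and `covec` below), so that `dg = 2ℓ` and `f = g^{3/2}/3`. Then
`df = √g ℓ` and `D²f = g^{-1/2} ℓ ⊗ ℓ − √g dx ⊗ dx`. Since `ℓ(0,1) = 1`, the determinant of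
this form is `−g^{-1/2} √g = −1`. Both `f` and `∇f = √g (−x, 1)` are continuous functions
of `(x, g)` that vanish on the boundary parabola `g = 0`.
-/

namespace Parab

open ContinuousLinearMap Topology

def gap (w : ℝ × ℝ) : ℝ := 2 * w.2 - w.1 ^ 2

def covec (w : ℝ × ℝ) : ℝ × ℝ →L[ℝ] ℝ := snd ℝ ℝ ℝ - w.1 • fst ℝ ℝ ℝ

@[simp] lemma covec_apply (w a : ℝ × ℝ) : covec w a = a.2 - w.1 * a.1 := by
  simp [covec]

lemma fParab_eq_gap (w : ℝ × ℝ) : fParab w = (1 / 3) * gap w ^ ((3 : ℝ) / 2) := rfl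

lemma isOpen_DParab : IsOpen DParab :=
  isOpen_lt (by fun_prop) (by fun_prop)

lemma gap_pos {w : ℝ × ℝ} (hw : w ∈ DParab) : 0 < gap w :=
  sub_pos.2 hw

lemma gap_boundary (x : ℝ) : gap (x, x ^ 2 / 2) = 0 := by
  simp only [gap]; ring

lemma continuous_gap : Continuous gap := by
  unfold gap; fun_prop

lemma contDiff_gap : ContDiff ℝ 2 gap := by
  unfold gap; fun_prop

lemma hasFDerivAt_gap (w : ℝ × ℝ) : HasFDerivAt gap ((2 : ℝ) • covec w) w := by
  have h := ((hasFDerivAt_snd (𝕜 := ℝ) (E := ℝ) (F := ℝ) (p := w)).const_mul 2).sub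
    ((hasFDerivAt_fst (𝕜 := ℝ) (E := ℝ) (F := ℝ) (p := w)).pow 2)
  refine h.congr_fderiv ?_
  ext <;> simp

lemma hasFDerivAt_covec (w : ℝ × ℝ) :
    HasFDerivAt covec (-(fst ℝ ℝ ℝ).smulRight (fst ℝ ℝ ℝ)) w := by
  have h := (hasFDerivAt_const (snd ℝ ℝ ℝ) w).sub
    ((hasFDerivAt_fst (𝕜 := ℝ) (E := ℝ) (F := ℝ) (p := w)).smul
      (hasFDerivAt_const (fst ℝ ℝ ℝ) w))
  exact h.congr_fderiv (by simp)

lemma hasFDerivAt_fParab {w : ℝ × ℝ} (hw : w ∈ DParab) :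
    HasFDerivAt fParab (√(gap w) • covec w) w := by
  have h := ((hasFDerivAt_gap w).rpow_const (p := 3 / 2) (Or.inl (gap_pos hw).ne')).const_mul
    (1 / 3 : ℝ)
  refine h.congr_fderiv ?_
  rw [Real.sqrt_eq_rpow, show (3 : ℝ) / 2 - 1 = 1 / 2 by norm_num, smul_smul, smul_smul]
  congr 1
  ring

lemma hasFDerivAt_sqrt_gap {w : ℝ × ℝ} (hw : w ∈ DParab) :
    HasFDerivAt (fun q => √(gap q)) ((√(gap w))⁻¹ • covec w) w := by
  refine ((hasFDerivAt_gap w).sqrt (gap_pos hw).ne').congr_fderiv ?_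
  rw [smul_smul]
  congr 1
  have : √(gap w) ≠ 0 := (Real.sqrt_pos.2 (gap_pos hw)).ne'
  field_simp

lemma hess_fParab {w : ℝ × ℝ} (hw : w ∈ DParab) (a b : ℝ × ℝ) :
    hess fParab w a b
      = (√(gap w))⁻¹ * covec w a * covec w b - √(gap w) * (a.1 * b.1) := by
  have hfd : fderiv ℝ fParab =ᶠ[𝓝 w] fun q => √(gap q) • covec q := by
    filter_upwards [isOpen_DParab.mem_nhds hw] with q hq
    exact (hasFDerivAt_fParab hq).fderiv
  have hd : HasFDerivAt (fun q => √(gap q) • covec q) _ w :=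
    (hasFDerivAt_sqrt_gap hw).smul (hasFDerivAt_covec w)
  rw [hess, hfd.fderiv_eq, hd.fderiv]
  simp only [add_apply, smul_apply, smulRight_apply, neg_apply, covec_apply, coe_fst',
    smul_eq_mul]
  ring

lemma hessDet_fParab {w : ℝ × ℝ} (hw : w ∈ DParab) : hessDet fParab w = -1 := by
  have hs : √(gap w) ≠ 0 := (Real.sqrt_pos.2 (gap_pos hw)).ne'
  simp only [hessDet, hess_fParab hw, covec_apply]
  field_simp
  ring

lemma contDiffOn_fParab : ContDiffOn ℝ 2 fParab DParab := fun _ hw =>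
  (contDiffAt_const.mul
    (contDiff_gap.contDiffAt.rpow_const_of_ne (gap_pos hw).ne')).contDiffWithinAt

lemma grad_fParab {w : ℝ × ℝ} (hw : w ∈ DParab) :
    grad fParab w = √(gap w) • (-w.1, 1) := by
  simp [grad, (hasFDerivAt_fParab hw).fderiv]

lemma tendsto_fParab_boundary (x : ℝ) :
    Tendsto fParab (𝓝[DParab] (x, x ^ 2 / 2)) (𝓝 0) := by
  have hc : Continuous fParab :=
    continuous_const.mul (continuous_gap.rpow_const fun _ => Or.inr (by norm_num))
  have h0 : fParab (x, x ^ 2 / 2) = 0 := by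
    rw [fParab_eq_gap, gap_boundary, Real.zero_rpow (by norm_num), mul_zero]
  have ht := (hc.continuousWithinAt (s := DParab) (x := (x, x ^ 2 / 2))).tendsto
  rwa [h0] at ht

lemma tendsto_grad_fParab_boundary (x : ℝ) :
    Tendsto (grad fParab) (𝓝[DParab] (x, x ^ 2 / 2)) (𝓝 (0, 0)) := by
  have hc : Continuous fun w : ℝ × ℝ => √(gap w) • (-w.1, (1 : ℝ)) := by
    have := continuous_gap; fun_prop
  have h0 : √(gap (x, x ^ 2 / 2)) • (-x, (1 : ℝ)) = (0, 0) := by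
    rw [gap_boundary, Real.sqrt_zero, zero_smul, Prod.zero_eq_mk]
  have ht := hc.continuousWithinAt (s := DParab) (x := (x, x ^ 2 / 2)).tendsto
  rw [h0] at ht
  refine ht.congr' ?_
  filter_upwards [self_mem_nhdsWithin] with q hq
  exact (grad_fParab hq).symm

end Parab

open Parab in
/-- `f(x,y) = (1/3)(2y − x²)^{3/2}` is C² on `D = {2y > x²}` with `det D²f ≡ −1`, and `f`
and `∇f` extend continuously by zero to the boundary parabola `{2y = x²}`: `f` is the
inner area distance of the parabola `y = x²/2`, and its graph is an indefinite improper
affine sphere. -/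
theorem statement13 :
    ContDiffOn ℝ 2 fParab DParab ∧
    (∀ w ∈ DParab, hessDet fParab w = -1) ∧
    (∀ x : ℝ,
      Tendsto fParab (nhdsWithin (x, x ^ 2 / 2) DParab) (nhds 0) ∧
      Tendsto (grad fParab) (nhdsWithin (x, x ^ 2 / 2) DParab) (nhds (0, 0))) :=
  ⟨contDiffOn_fParab, fun _ hw => hessDet_fParab hw,
    fun x => ⟨tendsto_fParab_boundary x, tendsto_grad_fParab_boundary x⟩⟩
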